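/- arXiv:2006.10087 — 7 statements merged into one kernel-verified Lean document; each statement's English description precedes it below -/
import Mathlib

section
/- If labeled posets (P,ω) and (Q,τ) satisfy (P,ω) ≤_M (Q,τ), then the number of linear extensions of P is at most the number of linear extensions of Q. -/
open scoped BigOperators

section CommonDefs

variable {α : Type*}

/-- A `(P,ω)`-partition: an order-preserving map from the poset to the positive
integers (encoded in `ℕ`, all values `≥ 1`), strictly increasing along strict edges. -/
def IsPPart [PartialOrder α] (ω : α → ℕ) (f : α → ℕ) : Prop :=
  (∀ p, 1 ≤ f p) ∧ (∀ a b : α, a < b → f a ≤ f b) ∧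
    ∀ a b : α, a < b → ω b < ω a → f a < f b

/-- The `(P,ω)`-partition enumerator `K_{(P,ω)}` as a formal power series in the
variables `x_1, x_2, …` (the variable indexed by `i : ℕ` stands for `x_{i+1}`). -/
noncomputable def Kgen [PartialOrder α] (ω : α → ℕ) : MvPowerSeries ℕ ℚ :=
  fun d => (Set.ncard {f : α → ℕ |
    IsPPart ω f ∧ ∀ i : ℕ, Set.ncard {p : α | f p = i + 1} = d i} : ℚ)

/-- `K_{(P,ω)}` for a labeling by `Fin n`. -/
noncomputable def Kω [PartialOrder α] {n : ℕ} (ω : α ≃ Fin n) : MvPowerSeries ℕ ℚ :=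
  Kgen fun p => ((ω p : ℕ))

open Classical in
/-- The monomial quasisymmetric function `M_α`. -/
noncomputable def Mgen {n : ℕ} (c : Composition n) : MvPowerSeries ℕ ℚ :=
  fun d => if (∃ g : Fin c.length → ℕ, StrictMono g ∧
      d = ∑ j : Fin c.length, Finsupp.single (g j) (c.blocksFun j)) then 1 else 0

/-- The partial-sum set `S(α) ⊆ {1,…,n−1}` of a composition of `n`. -/
def compS {n : ℕ} (c : Composition n) : Finset ℕ :=
  (Finset.range (c.length - 1)).image fun i => c.sizeUpTo (i + 1)

open Classical in
/-- `F_{S,n} = Σ_{S ⊆ T ⊆ [n-1]} M_{T,n}`. -/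
noncomputable def FgenSet (n : ℕ) (S : Finset ℕ) : MvPowerSeries ℕ ℚ :=
  ∑ c : Composition n, if S ⊆ compS c then Mgen c else 0

/-- The fundamental quasisymmetric function `F_α`. -/
noncomputable def Fgen {n : ℕ} (c : Composition n) : MvPowerSeries ℕ ℚ :=
  FgenSet n (compS c)

/-- `e : Fin n ≃ α` is a listing of the elements of the poset compatible with the order. -/
def IsLinext [PartialOrder α] {n : ℕ} (e : Fin n ≃ α) : Prop :=
  ∀ i j : Fin n, e i < e j → i < j

/-- The set `L(P,ω)` of linear extensions, regarded as words (permutations of `Fin n`). -/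
def Linext [PartialOrder α] {n : ℕ} (ω : α ≃ Fin n) : Set (Fin n → Fin n) :=
  {w | ∃ e : Fin n ≃ α, IsLinext e ∧ w = fun i => ω (e i)}

open Classical in
/-- Descent set of a word, with 1-based positions, a subset of `{1,…,n−1}`:
`i ∈ Des w` iff the letter in position `i` is greater than the letter in position `i+1`. -/
noncomputable def Des {n : ℕ} (w : Fin n → Fin n) : Finset ℕ :=
  (Finset.Ioo 0 n).filter fun i =>
    ∃ hi : i < n, w ⟨i, hi⟩ < w ⟨i - 1, Nat.lt_of_le_of_lt (Nat.sub_le i 1) hi⟩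

/-- The F-support: the set of descent compositions of linear extensions. -/
def suppF [PartialOrder α] {n : ℕ} (ω : α ≃ Fin n) : Set (Composition n) :=
  {c | ∃ w ∈ Linext ω, compS c = Des w}

/-- The M-support: compositions `α = (α_1,…,α_k)` realized as fiber sizes of a
`(P,ω)`-partition with all values at most `k`. -/
def suppM [PartialOrder α] {n : ℕ} (ω : α ≃ Fin n) : Set (Composition n) :=
  {c | ∃ f : α → ℕ, IsPPart (fun p => ((ω p : ℕ))) f ∧ (∀ p, f p ≤ c.length) ∧
      ∀ i : Fin c.length, Set.ncard {p : α | f p = (i : ℕ) + 1} = c.blocksFun i}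

/-- `A` is a non-negative linear combination of fundamental quasisymmetric functions. -/
def NonnegFComb (A : MvPowerSeries ℕ ℚ) : Prop :=
  ∃ (s : Finset ((n : ℕ) × Composition n)) (coef : ((n : ℕ) × Composition n) → ℚ),
    (∀ x, 0 ≤ coef x) ∧ A = ∑ x ∈ s, coef x • Fgen x.2

/-- `A` is a non-negative linear combination of monomial quasisymmetric functions. -/
def NonnegMComb (A : MvPowerSeries ℕ ℚ) : Prop :=
  ∃ (s : Finset ((n : ℕ) × Composition n)) (coef : ((n : ℕ) × Composition n) → ℚ),
    (∀ x, 0 ≤ coef x) ∧ A = ∑ x ∈ s, coef x • Mgen x.2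

/-- `A ≤_F B`. -/
def LeF (A B : MvPowerSeries ℕ ℚ) : Prop := NonnegFComb (B - A)

/-- `A ≤_M B`. -/
def LeM (A B : MvPowerSeries ℕ ℚ) : Prop := NonnegMComb (B - A)

/-- The order-reversing permutation of `Fin n`. -/
def finRevEquiv {n : ℕ} : Fin n ≃ Fin n :=
  ⟨Fin.rev, Fin.rev, Fin.rev_rev, Fin.rev_rev⟩

def barLabel {n : ℕ} (ω : α ≃ Fin n) : α ≃ Fin n := ω.trans finRevEquiv

/-- The star involution: the dual poset with labels `ω*(a) = n+1−ω(a)`. -/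
def starLabel {n : ℕ} (ω : α ≃ Fin n) : αᵒᵈ ≃ Fin n :=
  OrderDual.ofDual.trans (barLabel ω)

/-- The reverse of a composition. -/
def compRev {n : ℕ} (c : Composition n) : Composition n :=
  ⟨c.blocks.reverse, fun h => c.blocks_pos (List.mem_reverse.mp h), by
    rw [List.sum_reverse]; exact c.blocks_sum⟩

/-- A saturated chain from `b` down to a minimal element, listed from top to bottom. -/
def IsDownChain [PartialOrder α] (b : α) (l : List α) : Prop :=
  l ≠ [] ∧ l.head? = some b ∧ List.Chain' (fun x y => y ⋖ x) l ∧
    ∀ x ∈ l.getLast?, IsMin x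

/-- Number of strict edges in a top-to-bottom saturated chain. -/
def strictCountDown (ω : α → ℕ) (l : List α) : ℕ :=
  (l.zip l.tail).countP fun p => decide (ω p.1 < ω p.2)

/-- The jump of an element: the maximum number of strict edges on a saturated chain
from `b` down to a minimal element. -/
noncomputable def jumpOf [PartialOrder α] (ω : α → ℕ) (b : α) : ℕ :=
  sSup {k | ∃ l : List α, IsDownChain b l ∧ strictCountDown ω l = k}

/-- The maximum jump of an element. -/
noncomputable def maxJump [PartialOrder α] [Fintype α] (ω : α → ℕ) : ℕ :=
  sSup {k | ∃ b : α, jumpOf ω b = k}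

/-- The jump sequence `(j_0, …, j_k)` as a list. -/
noncomputable def jumpBlocks [PartialOrder α] [Fintype α] (ω : α → ℕ) : List ℕ :=
  (List.range (maxJump ω + 1)).map fun i => Set.ncard {b : α | jumpOf ω b = i}

/-- A maximal chain (saturated, from a minimal to a maximal element), bottom to top. -/
def IsMaxChainList [PartialOrder α] (l : List α) : Prop :=
  l ≠ [] ∧ List.Chain' (· ⋖ ·) l ∧ (∀ x ∈ l.head?, IsMin x) ∧ ∀ x ∈ l.getLast?, IsMax x

/-- Number of strict edges in a bottom-to-top saturated chain. -/
def strictCountUp (ω : α → ℕ) (l : List α) : ℕ :=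
  (l.zip l.tail).countP fun p => decide (ω p.2 < ω p.1)

/-- Number of weak edges in a bottom-to-top saturated chain. -/
def weakCountUp (ω : α → ℕ) (l : List α) : ℕ :=
  (l.zip l.tail).countP fun p => decide (ω p.1 < ω p.2)

/-- A weak convex subposet: convex, and all cover relations inside it are weak. -/
def IsWeakConvex [PartialOrder α] (ω : α → ℕ) (S : Set α) : Prop :=
  (∀ ⦃x y z : α⦄, x < y → y < z → x ∈ S → z ∈ S → y ∈ S) ∧
    ∀ a ∈ S, ∀ b ∈ S, a ⋖ b → ω a < ω b

/-- The order relation of the assembled poset `𝒫[i → P_i]`. -/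
def assembledLe {I : Type*} (PO : PartialOrder I) {X : I → Type*}
    (Pc : ∀ i, PartialOrder (X i)) (x y : Σ i, X i) : Prop :=
  PO.lt x.1 y.1 ∨ ∃ h : x.1 = y.1, (Pc y.1).le (h ▸ x.2) y.2

/-- The assembled poset `𝒫[i → P_i]` as a partial order on the disjoint union. -/
def assembledOrder {I : Type*} (PO : PartialOrder I) {X : I → Type*}
    (Pc : ∀ i, PartialOrder (X i)) : PartialOrder (Σ i, X i) := by
  letI : PartialOrder I := PO
  letI instX : ∀ i, PartialOrder (X i) := Pc
  exact
  { le := assembledLe PO Pc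
    lt := fun x y => assembledLe PO Pc x y ∧ ¬ assembledLe PO Pc y x
    lt_iff_le_not_ge := fun _ _ => Iff.rfl
    le_refl := fun x => Or.inr ⟨rfl, le_refl x.2⟩
    le_trans := by
      rintro ⟨i, p⟩ ⟨j, q⟩ ⟨k, r⟩ h1 h2
      rcases h1 with h1 | ⟨e1, h1⟩ <;> rcases h2 with h2 | ⟨e2, h2⟩
      · exact Or.inl (lt_trans h1 h2)
      · dsimp only at e2 h2 ⊢; subst e2; exact Or.inl h1
      · dsimp only at e1 h1 ⊢; subst e1; exact Or.inl h2
      · dsimp only at e1 h1 e2 h2 ⊢; subst e1; subst e2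
        exact Or.inr ⟨rfl, le_trans h1 h2⟩
    le_antisymm := by
      rintro ⟨i, p⟩ ⟨j, q⟩ h1 h2
      rcases h1 with h1 | ⟨e1, h1⟩ <;> rcases h2 with h2 | ⟨e2, h2⟩
      · exact absurd (lt_trans h1 h2) (lt_irrefl _)
      · dsimp only at e2 h2 ⊢; subst e2; exact absurd h1 (lt_irrefl _)
      · dsimp only at e1 h1 ⊢; subst e1; exact absurd h2 (lt_irrefl _)
      · dsimp only at e1 h1 e2 h2 ⊢; subst e1
        obtain rfl : p = q := le_antisymm h1 h2
        rfl }

end CommonDefs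

/-! The coefficient of `x_1 x_2 ⋯ x_m` in `K_{(P,ω)}` counts the `(P,ω)`-partitions that are
bijections onto `{1,…,m}`. Such a map is the position function `p ↦ e⁻¹(p)` of a listing `e`
of `P`, and it is a `(P,ω)`-partition exactly when `e` is a linear extension, whatever `ω` is;
so that coefficient is the number of linear extensions `Fin m ≃ P`, which is `0` unless
`m = |P|`. Since every `M_α` has nonnegative coefficients, `≤_M` implies coefficientwise `≤`,
and comparing the coefficients of `x_1 ⋯ x_{|P|}` gives the theorem. -/

lemma Mgen_nonneg {n : ℕ} (c : Composition n) (d : ℕ →₀ ℕ) : 0 ≤ Mgen c d := by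
  unfold Mgen
  split_ifs <;> norm_num

lemma LeM.coeff_le {A B : MvPowerSeries ℕ ℚ} (h : LeM A B) (d : ℕ →₀ ℕ) : A d ≤ B d := by
  obtain ⟨s, coef, hcoef, hs⟩ := h
  have hdiff : B d - A d = ∑ x ∈ s, coef x * Mgen x.2 d := by
    change MvPowerSeries.coeff d (B - A) = _
    rw [hs, map_sum]
    rfl
  have hnonneg := Finset.sum_nonneg fun x (_ : x ∈ s) => mul_nonneg (hcoef x) (Mgen_nonneg x.2 d)
  linarith

section LinearExtensionCoefficient

variable {α : Type*} {m : ℕ}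

/-- The exponent of the monomial `x_1 x_2 ⋯ x_m`. -/
noncomputable def firstVarsExp (m : ℕ) : ℕ →₀ ℕ :=
  ∑ i ∈ Finset.range m, Finsupp.single i 1

lemma firstVarsExp_apply (m i : ℕ) : firstVarsExp m i = if i < m then 1 else 0 := by
  classical
  simp [firstVarsExp, Finsupp.finsetSum_apply, Finsupp.single_apply]

def positionFn (e : Fin m ≃ α) (p : α) : ℕ := (e.symm p : ℕ) + 1

lemma positionFn_injective : Function.Injective (positionFn : (Fin m ≃ α) → α → ℕ) := by
  intro e e' h
  refine Equiv.symm_bijective.injective (Equiv.ext fun p => Fin.ext ?_)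
  simpa [positionFn] using congrFun h p

lemma isPPart_positionFn_iff [PartialOrder α] (ω : α → ℕ) (e : Fin m ≃ α) :
    IsPPart ω (positionFn e) ↔ IsLinext e := by
  constructor
  · rintro ⟨-, hmono, -⟩ i j hij
    have hle : (i : ℕ) + 1 ≤ (j : ℕ) + 1 := by simpa [positionFn] using hmono _ _ hij
    have hne : i ≠ j := by rintro rfl; exact lt_irrefl _ hij
    exact lt_of_le_of_ne (Fin.le_iff_val_le_val.2 (by omega)) hne
  · intro he
    have hlt : ∀ a b : α, a < b → positionFn e a < positionFn e b := fun a b hab => by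
      have := he (e.symm a) (e.symm b) (by simpa using hab)
      simp only [positionFn]
      omega
    exact ⟨fun _ => Nat.le_add_left 1 _, fun a b hab => (hlt a b hab).le,
      fun a b hab _ => hlt a b hab⟩

lemma ncard_fiber_positionFn (e : Fin m ≃ α) (i : ℕ) :
    Set.ncard {p : α | positionFn e p = i + 1} = firstVarsExp m i := by
  rw [firstVarsExp_apply]
  split_ifs with hi
  · convert Set.ncard_singleton (e ⟨i, hi⟩)
    ext p
    rw [Set.mem_ofPred_eq, Set.mem_singleton_iff, ← Equiv.symm_apply_eq, Fin.ext_iff]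
    simp [positionFn]
  · convert Set.ncard_empty α
    ext p
    simp only [positionFn, Set.mem_ofPred_eq, Set.mem_empty_iff_false, iff_false]
    have := (e.symm p).isLt
    omega

lemma exists_positionFn_eq [Finite α] {f : α → ℕ} (hpos : ∀ p, 1 ≤ f p)
    (hfib : ∀ i, Set.ncard {p : α | f p = i + 1} = firstVarsExp m i) :
    ∃ e : Fin m ≃ α, positionFn e = f := by
  have hmem : ∀ p, p ∈ {q : α | f q = (f p - 1) + 1} := fun p => by
    simp [Nat.sub_add_cancel (hpos p)]
  have hlt : ∀ p, f p - 1 < m := fun p => by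
    by_contra hm
    have hempty := hfib (f p - 1)
    rw [firstVarsExp_apply, if_neg hm, Set.ncard_eq_zero] at hempty
    exact Set.notMem_empty p (hempty ▸ hmem p)
  let g : α → Fin m := fun p => ⟨f p - 1, hlt p⟩
  have hinj : g.Injective := fun a b hab => by
    have hsub : (Set.ncard {q : α | f q = (f a - 1) + 1}) ≤ 1 := by
      rw [hfib, firstVarsExp_apply]; split_ifs <;> simp
    have hb : b ∈ {q : α | f q = (f a - 1) + 1} := by
      rw [show f a - 1 = f b - 1 from congrArg Fin.val hab]; exact hmem b
    exact (Set.ncard_le_one (Set.toFinite _)).1 hsub a (hmem a) b hb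
  have hsurj : g.Surjective := fun i => by
    have hone := hfib i
    rw [firstVarsExp_apply, if_pos i.isLt] at hone
    obtain ⟨p, hp⟩ := (Set.ncard_pos (Set.toFinite _)).1 (hone ▸ Nat.one_pos)
    exact ⟨p, Fin.ext (by simp [g, show f p = i + 1 from hp])⟩
  exact ⟨(Equiv.ofBijective g ⟨hinj, hsurj⟩).symm, funext fun p => Nat.sub_add_cancel (hpos p)⟩

lemma setOf_isPPart_fiber_eq_image [PartialOrder α] [Finite α] (ω : α → ℕ) (m : ℕ) :
    {f : α → ℕ | IsPPart ω f ∧ ∀ i, Set.ncard {p : α | f p = i + 1} = firstVarsExp m i} =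
      positionFn '' {e : Fin m ≃ α | IsLinext e} := by
  ext f
  constructor
  · rintro ⟨hf, hfib⟩
    obtain ⟨e, rfl⟩ := exists_positionFn_eq hf.1 hfib
    exact ⟨e, (isPPart_positionFn_iff ω e).1 hf, rfl⟩
  · rintro ⟨e, he, rfl⟩
    exact ⟨(isPPart_positionFn_iff ω e).2 he, ncard_fiber_positionFn e⟩

lemma Kgen_firstVarsExp [PartialOrder α] [Finite α] (ω : α → ℕ) (m : ℕ) :
    Kgen ω (firstVarsExp m) = Nat.card {e : Fin m ≃ α // IsLinext e} := by
  rw [Kgen, setOf_isPPart_fiber_eq_image, Set.ncard_image_of_injective _ positionFn_injective]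
  exact congrArg Nat.cast (Nat.card_coe_set_eq _).symm

end LinearExtensionCoefficient

lemma card_linext_le_of_equiv {β : Type*} [PartialOrder β] {n : ℕ} (τ : β ≃ Fin n) (m : ℕ) :
    Nat.card {e : Fin m ≃ β // IsLinext e} ≤ Nat.card {e : Fin n ≃ β // IsLinext e} := by
  by_cases hmn : m = n
  · subst hmn; rfl
  · have : IsEmpty (Fin m ≃ β) := ⟨fun e => hmn (Fin.equiv_iff_eq.1 ⟨e.trans τ⟩)⟩
    simp

theorem stmt_5_general {α β : Type*} [PartialOrder α] [PartialOrder β]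
    {m n : ℕ} (ω : α ≃ Fin m) (τ : β ≃ Fin n)
    (h : LeM (Kω ω) (Kω τ)) :
    Nat.card {e : Fin m ≃ α // IsLinext e} ≤ Nat.card {e : Fin n ≃ β // IsLinext e} := by
  have : Finite α := .of_equiv _ ω.symm
  have : Finite β := .of_equiv _ τ.symm
  have hcoeff := h.coeff_le (firstVarsExp m)
  rw [Kω, Kω, Kgen_firstVarsExp, Kgen_firstVarsExp] at hcoeff
  exact (Nat.cast_le.1 hcoeff).trans (card_linext_le_of_equiv τ m)

/-- `(P,ω) ≤_M (Q,τ)` implies `|L(P)| ≤ |L(Q)|`. -/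
theorem stmt_5 {α β : Type*} [PartialOrder α] [PartialOrder β] [Fintype α] [Fintype β]
    {m n : ℕ} (ω : α ≃ Fin m) (τ : β ≃ Fin n)
    (h : LeM (Kω ω) (Kω τ)) :
    Nat.card {e : Fin m ≃ α // IsLinext e} ≤ Nat.card {e : Fin n ≃ β // IsLinext e} :=
  stmt_5_general ω τ h
end

section
/- Let (P,ω) and (Q,τ) be labeled posets with supp_M(P,ω) ⊆ supp_M(Q,τ). If every cover relation of (P,ω) is a weak edge, then every cover relation of (Q,τ) is a weak edge. -/
open scoped BigOperators

/-! Both conditions are read off the one-block composition `(n)`: it lies in `supp_M(P,ω)`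
exactly when the constant map `1` is a `(P,ω)`-partition, i.e. when `ω` is strictly order-preserving,
and in a finite poset this holds iff every cover relation is a weak edge. -/

section SingleBlock

variable {α : Type*} [PartialOrder α]

theorem isPPart_const_one_iff {ω : α → ℕ} : IsPPart ω (fun _ => 1) ↔ Monotone ω := by
  rw [monotone_iff_forall_lt]
  refine ⟨fun ⟨_, _, hstrict⟩ a b hab => not_lt.1 fun hba => (hstrict a b hab hba).false,
    fun hω => ⟨fun _ => le_rfl, fun _ _ _ => le_rfl, fun a b hab hba => ((hω hab).not_gt hba).elim⟩⟩

theorem single_mem_suppM_iff {n : ℕ} (hn : 0 < n) (ω : α ≃ Fin n) :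
    Composition.single n hn ∈ suppM ω ↔ StrictMono ω := by
  have hmono : StrictMono ω ↔ Monotone fun p => (ω p : ℕ) :=
    ⟨fun h => (Fin.val_strictMono.comp h).monotone,
      fun h _ _ hab => h.strictMono_of_injective (Fin.val_injective.comp ω.injective) hab⟩
  rw [hmono, ← isPPart_const_one_iff]
  constructor
  · rintro ⟨f, hf, hf_le, -⟩
    have hf_one : f = fun _ => 1 := funext fun p => le_antisymm (hf_le p) (hf.1 p)
    exact hf_one ▸ hf
  · refine fun hf => ⟨_, hf, fun _ => le_rfl, fun i => ?_⟩
    rw [Composition.single_blocksFun]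
    fin_cases i
    simp [Set.ncard_univ, Nat.card_congr ω]

end SingleBlock

theorem stmt_6_general {α β : Type*} [PartialOrder α] [PartialOrder β] [Fintype α]
    {n : ℕ} (ω : α ≃ Fin n) (τ : β ≃ Fin n)
    (h : suppM ω ⊆ suppM τ)
    (hP : ∀ a b : α, a ⋖ b → ω a < ω b) :
    ∀ a b : β, a ⋖ b → τ a < τ b := by
  intro a b hab
  have hn : 0 < n := (τ a).pos
  classical
  let _ := Fintype.toLocallyFiniteOrder (α := α)
  have hω : StrictMono ω := (strictMono_iff_forall_covBy ω).2 hP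
  have hτ : StrictMono τ := (single_mem_suppM_iff hn τ).1 (h ((single_mem_suppM_iff hn ω).2 hω))
  exact hτ hab.lt

/-- under `M`-support containment, if `(P,ω)` has only weak edges then so
does `(Q,τ)`. -/
theorem stmt_6 {α β : Type*} [PartialOrder α] [PartialOrder β] [Fintype α] [Fintype β]
    {n : ℕ} (ω : α ≃ Fin n) (τ : β ≃ Fin n)
    (h : suppM ω ⊆ suppM τ)
    (hP : ∀ a b : α, a ⋖ b → ω a < ω b) :
    ∀ a b : β, a ⋖ b → τ a < τ b :=
  stmt_6_general ω τ h hP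
end

section
/- If labeled posets (P,ω) and (Q,τ) satisfy supp_M(P,ω) ⊆ supp_M(Q,τ) (in particular, if they satisfy supp_F(P,ω) ⊆ supp_F(Q,τ)), then jump(P,ω) ≤_dom jump(Q,τ). -/
open scoped BigOperators

/-! A `(P,ω)`-partition `f` increases weakly along every edge and strictly along strict ones, so
`jump b < f b`; hence `#{f ≤ m} ≤ #{jump < m}`, i.e. every composition realized by a
`(P,ω)`-partition, in particular every element of the M-support, is dominated by the jump
sequence. The jump sequence itself lies in the M-support, realized by `jump + 1`. The descent
composition of a linear extension is realized by numbering the runs between its descents, and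
listing the elements by increasing `(jump, label)` gives a linear extension whose descents occur
only where the jump increases, so its descent composition dominates the jump sequence. -/

open Finset

theorem ncard_setOf_eq_card_filter {α : Type*} [Fintype α] (p : α → Prop) [DecidablePred p] :
    {x | p x}.ncard = #{x | p x} := by
  rw [Set.ncard_eq_toFinset_card', Set.toFinset_ofPred]

namespace Composition

variable {n : ℕ} (c : Composition n)

theorem index_lt_iff (j : Fin n) (m : ℕ) :
    (c.index j : ℕ) < m ↔ (j : ℕ) < c.sizeUpTo m := by
  refine ⟨fun h => (c.lt_sizeUpTo_index_succ j).trans_le (c.monotone_sizeUpTo h), fun h => ?_⟩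
  by_contra! hm
  exact ((c.monotone_sizeUpTo hm).trans (c.sizeUpTo_index_le j)).not_gt h

theorem index_mono : Monotone c.index := fun i j hij => by
  have hj := (c.index_lt_iff j _).1 (Nat.lt_succ_self _)
  exact Nat.lt_succ_iff.1 ((c.index_lt_iff i _).2 (lt_of_le_of_lt hij hj))

theorem card_index_lt (m : ℕ) : #{j | (c.index j : ℕ) < m} = c.sizeUpTo m := by
  simp_rw [index_lt_iff]
  rw [Fin.card_filter_val_lt, min_eq_right (c.sizeUpTo_le m)]

theorem exists_sizeUpTo_eq_iff {x : ℕ} :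
    (∃ i, c.sizeUpTo i = x) ↔ ∃ b ∈ c.boundaries, (b : ℕ) = x := by
  simp only [boundaries, mem_map, mem_univ, true_and, exists_exists_eq_and]
  constructor
  · rintro ⟨i, rfl⟩
    rcases lt_or_ge i (c.length + 1) with hi | hi
    · exact ⟨⟨i, hi⟩, rfl⟩
    · exact ⟨Fin.last _, by simp [boundary, c.sizeUpTo_ofLength_le i (by omega)]⟩
  · rintro ⟨i, rfl⟩
    exact ⟨i, rfl⟩

theorem card_filter_le_eq_sizeUpTo {α : Type*} [Fintype α] {f : α → ℕ}
    (hf : ∀ p, 1 ≤ f p) (hfc : ∀ p, f p ≤ c.length)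
    (hfib : ∀ i : Fin c.length, {p | f p = (i : ℕ) + 1}.ncard = c.blocksFun i) (m : ℕ) :
    #{p | f p ≤ m} = c.sizeUpTo m := by
  classical
  induction m with
  | zero =>
    rw [c.sizeUpTo_zero, card_eq_zero, filter_eq_empty_iff]
    exact fun p _ h => by have := hf p; omega
  | succ m ih =>
    rcases lt_or_ge m c.length with hm | hm
    · have hsplit : filter (fun p => f p ≤ m + 1) univ =
          filter (fun p => f p ≤ m) univ ∪ filter (fun p => f p = m + 1) univ := by
        ext p
        simp only [mem_filter, mem_univ, true_and, mem_union]
        omega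
      rw [hsplit, card_union_of_disjoint (disjoint_filter.2 fun p _ h => by omega), ih,
        c.sizeUpTo_succ' ⟨m, hm⟩, ← hfib ⟨m, hm⟩, ncard_setOf_eq_card_filter]
    · rw [c.sizeUpTo_ofLength_le _ (by omega), ← c.sizeUpTo_ofLength_le m hm, ← ih]
      congr 1
      ext p
      have := hfc p
      simp only [mem_filter, mem_univ, true_and]
      omega

end Composition

theorem mem_compS_iff {n : ℕ} (c : Composition n) {x : ℕ} :
    x ∈ compS c ↔ 0 < x ∧ x < n ∧ ∃ i, c.sizeUpTo i = x := by
  simp only [compS, mem_image, mem_range]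
  constructor
  · rintro ⟨i, hi, rfl⟩
    refine ⟨?_, ?_, _, rfl⟩
    · simpa using (c.sizeUpTo_strict_mono (i := 0) (by omega)).trans_le
        (c.monotone_sizeUpTo (by omega : 1 ≤ i + 1))
    · exact (c.sizeUpTo_strict_mono (by omega)).trans_le (c.sizeUpTo_le (i + 2))
  · rintro ⟨h0, hn, i, rfl⟩
    have hi0 : i ≠ 0 := by rintro rfl; simp at h0
    have hil : i < c.length := by
      by_contra! h
      rw [c.sizeUpTo_ofLength_le i h] at hn
      exact hn.false
    exact ⟨i - 1, by omega, by rw [Nat.sub_add_cancel (by omega)]⟩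

theorem Composition.index_le_of_lt_at_compS {n : ℕ} (c : Composition n) {g : Fin n → ℕ}
    (hg : Monotone g)
    (hasc : ∀ i j : Fin n, (i : ℕ) + 1 = j → (j : ℕ) ∈ compS c → g i < g j)
    (j : Fin n) : (c.index j : ℕ) ≤ g j := by
  have hlt : ∀ t < c.length, c.sizeUpTo t < n := fun t ht =>
    (c.sizeUpTo_strict_mono ht).trans_le (c.sizeUpTo_le _)
  have hboundary : ∀ t (ht : t < c.length), t ≤ g ⟨c.sizeUpTo t, hlt t ht⟩ := by
    intro t ht
    induction t with
    | zero => exact Nat.zero_le _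
    | succ t ih =>
      have hst := c.sizeUpTo_strict_mono (i := t) (by omega)
      have hsn := hlt _ ht
      have hmem : c.sizeUpTo (t + 1) ∈ compS c := (mem_compS_iff c).2 ⟨by omega, hsn, _, rfl⟩
      have hjump :=
        hasc ⟨c.sizeUpTo (t + 1) - 1, by omega⟩ ⟨_, hsn⟩ (by simp only; omega) hmem
      have hmono := hg (show (⟨c.sizeUpTo t, hlt t (by omega)⟩ : Fin n) ≤
        ⟨c.sizeUpTo (t + 1) - 1, by omega⟩ from Fin.le_def.2 (by simp only; omega))
      have := ih (by omega)
      omega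
  exact (hboundary _ (c.index j).2).trans (hg (Fin.le_def.2 (c.sizeUpTo_index_le j)))

theorem exists_compS_eq {n : ℕ} {D : Finset ℕ} (hD : D ⊆ Ioo 0 n) :
    ∃ c : Composition n, compS c = D := by
  let s : CompositionAsSet n :=
    { boundaries := {i : Fin (n + 1) | (i : ℕ) = 0 ∨ (i : ℕ) = n ∨ (i : ℕ) ∈ D}
      zero_mem := by simp
      getLast_mem := by simp }
  refine ⟨s.toComposition, Finset.ext fun x => ?_⟩
  rw [mem_compS_iff, Composition.exists_sizeUpTo_eq_iff, s.toComposition_boundaries]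
  have hxD := @hD x
  simp only [s, mem_filter, mem_univ, true_and, mem_Ioo] at hxD ⊢
  constructor
  · rintro ⟨h0, hn, b, hb, rfl⟩
    exact (hb.resolve_left h0.ne').resolve_left hn.ne
  · intro hx
    obtain ⟨h0, hn⟩ := hxD hx
    exact ⟨h0, hn, ⟨x, by omega⟩, Or.inr (Or.inr hx), rfl⟩

theorem succ_mem_Des_iff {n : ℕ} (w : Fin n → Fin n) {j : ℕ} (hj : j + 1 < n) :
    j + 1 ∈ Des w ↔ w ⟨j + 1, hj⟩ < w ⟨j, by omega⟩ := by
  simp [Des, hj]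

theorem Des_subset_Ioo {n : ℕ} (w : Fin n → Fin n) : Des w ⊆ Ioo 0 n :=
  filter_subset _ _

theorem exists_mem_Des_of_lt {n : ℕ} (w : Fin n → Fin n) {i j : Fin n} (hij : i ≤ j)
    (hw : w j < w i) : ∃ d ∈ Des w, (i : ℕ) < d ∧ d ≤ j := by
  obtain ⟨j, hj⟩ := j
  rw [Fin.le_def] at hij
  induction j with
  | zero => exact absurd hw (by rw [show i = ⟨0, hj⟩ by ext; simp at hij ⊢; omega]; simp)
  | succ j ih =>
    have hij' : (i : ℕ) ≠ j + 1 := by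
      rintro h
      obtain rfl : i = ⟨j + 1, hj⟩ := Fin.ext h
      exact hw.false
    simp only at hij ⊢
    by_cases hd : w ⟨j + 1, hj⟩ < w ⟨j, by omega⟩
    · exact ⟨j + 1, (succ_mem_Des_iff w hj).2 hd, by omega, le_rfl⟩
    · obtain ⟨d, hd, hid, hdj⟩ :=
        ih (by omega) (by simp only; omega) ((not_lt.1 hd).trans_lt hw)
      exact ⟨d, hd, hid, by simp only at hdj; omega⟩

section Jump

theorem strictCountDown_cons_cons {α : Type*} (ω : α → ℕ) (b a : α) (t : List α) :
    strictCountDown ω (b :: a :: t) =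
      (if ω b < ω a then 1 else 0) + strictCountDown ω (a :: t) := by
  simp only [strictCountDown, List.zip_cons_cons, List.tail_cons, List.countP_cons]
  by_cases h : ω b < ω a <;> simp [h, Nat.add_comm]

variable {α : Type*} [PartialOrder α] {a b : α} {l : List α}

theorem IsDownChain.eq_cons (h : IsDownChain b l) : ∃ t, l = b :: t := by
  obtain ⟨hne, hhd, -⟩ := h
  cases l with
  | nil => exact absurd rfl hne
  | cons x t => exact ⟨t, by simpa using hhd⟩

theorem IsDownChain.cons (hab : a ⋖ b) (hl : IsDownChain a l) : IsDownChain b (b :: l) := by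
  obtain ⟨t, rfl⟩ := hl.eq_cons
  obtain ⟨-, -, hch, hmin⟩ := hl
  exact ⟨List.cons_ne_nil _ _, rfl, List.isChain_cons_cons.2 ⟨hab, hch⟩,
    by rwa [List.getLast?_cons_cons]⟩

theorem IsDownChain.of_cons_cons {t : List α} (h : IsDownChain b (b :: a :: t)) :
    a ⋖ b ∧ IsDownChain a (a :: t) := by
  obtain ⟨-, -, hch, hmin⟩ := h
  exact ⟨(List.isChain_cons_cons.1 hch).1, List.cons_ne_nil _ _, rfl,
    (List.isChain_cons_cons.1 hch).2, by rwa [List.getLast?_cons_cons] at hmin⟩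

theorem IsDownChain.length_le_card [Fintype α] (h : IsDownChain b l) :
    l.length ≤ Fintype.card α :=
  List.Nodup.length_le_card <|
    (List.isChain_iff_pairwise.1 (h.2.2.1.imp fun _ _ h => h.lt)).imp fun h => h.ne'

noncomputable def jumpKey (ω : α → ℕ) (b : α) : ℕ ×ₗ ℕ := toLex (jumpOf ω b, ω b)

theorem jumpOf_le_of_jumpKey_le {ω : α → ℕ} (h : jumpKey ω a ≤ jumpKey ω b) :
    jumpOf ω a ≤ jumpOf ω b :=
  Prod.Lex.monotone_fst _ _ h

theorem jumpOf_lt_of_jumpKey_lt {ω : α → ℕ} (h : jumpKey ω a < jumpKey ω b)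
    (hab : ω b < ω a) : jumpOf ω a < jumpOf ω b := by
  rcases Prod.Lex.toLex_lt_toLex.1 h with h | ⟨-, h⟩
  · exact h
  · exact absurd hab h.not_gt

theorem jumpKey_injective {ω : α → ℕ} (hω : Function.Injective ω) :
    Function.Injective (jumpKey ω) :=
  fun _ _ h => hω (congrArg Prod.snd (toLex.injective h))

variable [Finite α]

theorem exists_isDownChain (b : α) : ∃ l, IsDownChain b l := by
  induction b using WellFoundedLT.induction with
  | _ b ih =>
    by_cases hb : IsMin b
    · exact ⟨[b], List.cons_ne_nil _ _, rfl, List.isChain_singleton _, by simpa using hb⟩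
    · obtain ⟨a, hab⟩ := not_isMin_iff.1 hb
      obtain ⟨c, -, hcb⟩ := exists_le_covBy_of_lt hab
      obtain ⟨l, hl⟩ := ih c hcb.lt
      exact ⟨b :: l, hl.cons hcb⟩

variable (ω : α → ℕ)

theorem bddAbove_strictCountDown (b : α) :
    BddAbove {k | ∃ l, IsDownChain b l ∧ strictCountDown ω l = k} := by
  have := Fintype.ofFinite α
  refine ⟨Fintype.card α, ?_⟩
  rintro _ ⟨l, hl, rfl⟩
  exact List.countP_le_length.trans ((by simp : (l.zip l.tail).length ≤ l.length).trans
    hl.length_le_card)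

theorem exists_isDownChain_strictCountDown_eq_jumpOf (b : α) :
    ∃ l, IsDownChain b l ∧ strictCountDown ω l = jumpOf ω b :=
  Nat.sSup_mem (by obtain ⟨l, hl⟩ := exists_isDownChain b; exact ⟨_, l, hl, rfl⟩)
    (bddAbove_strictCountDown ω b)

theorem strictCountDown_le_jumpOf (h : IsDownChain b l) : strictCountDown ω l ≤ jumpOf ω b :=
  le_csSup (bddAbove_strictCountDown ω b) ⟨l, h, rfl⟩

theorem jumpOf_add_le_of_covBy (hab : a ⋖ b) :
    jumpOf ω a + (if ω b < ω a then 1 else 0) ≤ jumpOf ω b := by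
  obtain ⟨l, hl, hcount⟩ := exists_isDownChain_strictCountDown_eq_jumpOf ω a
  obtain ⟨t, rfl⟩ := hl.eq_cons
  have := strictCountDown_le_jumpOf ω (hl.cons hab)
  rw [strictCountDown_cons_cons, hcount] at this
  omega

/-- The first edge of a chain realizing the jump of `b`. -/
theorem exists_covBy_jumpOf_le (hb : 0 < jumpOf ω b) :
    ∃ a, a ⋖ b ∧ jumpOf ω b ≤ jumpOf ω a + (if ω b < ω a then 1 else 0) := by
  obtain ⟨l, hl, hcount⟩ := exists_isDownChain_strictCountDown_eq_jumpOf ω b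
  obtain ⟨t, rfl⟩ := hl.eq_cons
  cases t with
  | nil => exact absurd hcount.symm hb.ne'
  | cons a t =>
    obtain ⟨hab, ha⟩ := hl.of_cons_cons
    refine ⟨a, hab, ?_⟩
    rw [← hcount, strictCountDown_cons_cons]
    have := strictCountDown_le_jumpOf ω ha
    omega

theorem jumpOf_lt_of_isPPart {f : α → ℕ} (hf : IsPPart ω f) (b : α) : jumpOf ω b < f b := by
  induction b using WellFoundedLT.induction with
  | _ b ih =>
    rcases Nat.eq_zero_or_pos (jumpOf ω b) with hb | hb
    · exact hb ▸ hf.1 b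
    · obtain ⟨a, hab, hle⟩ := exists_covBy_jumpOf_le ω hb
      have := ih a hab.lt
      split_ifs at hle with hs
      · have := hf.2.2 a b hab.lt hs; omega
      · have := hf.2.1 a b hab.lt; omega

theorem exists_jumpOf_eq_of_le {i : ℕ} (hi : i ≤ jumpOf ω b) : ∃ a, jumpOf ω a = i := by
  induction b using WellFoundedLT.induction with
  | _ b ih =>
    rcases hi.eq_or_lt with hi | hi
    · exact ⟨b, hi.symm⟩
    · obtain ⟨a, hab, hle⟩ := exists_covBy_jumpOf_le ω (b := b) (by omega)
      exact ih a hab.lt (by split_ifs at hle <;> omega)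

variable {ω} (hω : Function.Injective ω)
include hω

theorem jumpKey_lt_of_covBy (hab : a ⋖ b) : jumpKey ω a < jumpKey ω b := by
  have hjump := jumpOf_add_le_of_covBy ω hab
  refine Prod.Lex.toLex_lt_toLex.2 ?_
  split_ifs at hjump with hs
  · exact Or.inl (by omega)
  · have : ω a < ω b := lt_of_le_of_ne (not_lt.1 hs) (hω.ne hab.ne)
    rcases hjump.lt_or_eq with h | h
    · exact Or.inl (by omega)
    · exact Or.inr ⟨by omega, this⟩

theorem jumpKey_strictMono : StrictMono (jumpKey ω) := by
  intro a b hab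
  induction b using WellFoundedLT.induction with
  | _ b ih =>
    obtain ⟨c, hac, hcb⟩ := exists_le_covBy_of_lt hab
    rcases hac.eq_or_lt with rfl | hac
    · exact jumpKey_lt_of_covBy hω hcb
    · exact (ih c hcb.lt hac).trans (jumpKey_lt_of_covBy hω hcb)

theorem isPPart_jumpOf_add_one : IsPPart ω fun b => jumpOf ω b + 1 :=
  ⟨fun _ => Nat.le_add_left _ _,
    fun _ _ hab => Nat.succ_le_succ (jumpOf_le_of_jumpKey_le (jumpKey_strictMono hω hab).le),
    fun _ _ hab hs => Nat.succ_lt_succ (jumpOf_lt_of_jumpKey_lt (jumpKey_strictMono hω hab) hs)⟩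

end Jump

section JumpBlocks

variable {α : Type*} [PartialOrder α] [Fintype α] (ω : α → ℕ)

theorem jumpOf_le_maxJump (b : α) : jumpOf ω b ≤ maxJump ω :=
  le_csSup (Set.finite_range (jumpOf ω)).bddAbove ⟨b, rfl⟩

theorem exists_jumpOf_eq [Nonempty α] {i : ℕ} (hi : i ≤ maxJump ω) :
    ∃ b, jumpOf ω b = i := by
  obtain ⟨b, hb⟩ : ∃ b, jumpOf ω b = maxJump ω :=
    Nat.sSup_mem (Set.range_nonempty (jumpOf ω)) (Set.finite_range (jumpOf ω)).bddAbove
  exact exists_jumpOf_eq_of_le ω (hb ▸ hi)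

theorem getElem_jumpBlocks {i : ℕ} (hi : i < (jumpBlocks ω).length) :
    (jumpBlocks ω)[i] = {b | jumpOf ω b = i}.ncard := by
  simp [jumpBlocks]

theorem sum_take_jumpBlocks (m : ℕ) :
    ((jumpBlocks ω).take m).sum = #{b | jumpOf ω b < m} := by
  have hmin : #{b | jumpOf ω b < m} = #{b | jumpOf ω b < min m (maxJump ω + 1)} := by
    congr 1
    ext b
    have := jumpOf_le_maxJump ω b
    simp only [mem_filter, mem_univ, true_and]
    omega
  rw [jumpBlocks, ← List.map_take, List.take_range, hmin,
    card_eq_sum_card_fiberwise (f := jumpOf ω) (t := range _)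
      (fun b hb => mem_range.2 (mem_filter.1 hb).2)]
  refine (Finset.sum_congr rfl fun i hi => ?_ : ∑ i ∈ range _, {b | jumpOf ω b = i}.ncard = _)
  rw [ncard_setOf_eq_card_filter, filter_filter]
  congr 1
  ext b
  simp only [mem_filter, mem_univ, true_and, iff_and_self]
  exact fun h => h ▸ mem_range.1 hi

end JumpBlocks

section Supports

variable {α : Type*} [PartialOrder α] [Fintype α] {n : ℕ}

theorem sizeUpTo_le_card_jumpOf_lt {ω f : α → ℕ} (hf : IsPPart ω f) {c : Composition n}
    (hfc : ∀ m, #{p | f p ≤ m} = c.sizeUpTo m) (m : ℕ) :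
    c.sizeUpTo m ≤ #{p | jumpOf ω p < m} := by
  rw [← hfc]
  exact card_le_card <|
    monotone_filter_right _ fun p _ hp => (jumpOf_lt_of_isPPart ω hf p).trans_le hp

theorem exists_isPPart_of_mem_suppM {ω : α ≃ Fin n} {c : Composition n} (hc : c ∈ suppM ω) :
    ∃ f, IsPPart (fun p => (ω p : ℕ)) f ∧ ∀ m, #{p | f p ≤ m} = c.sizeUpTo m := by
  obtain ⟨f, hf, hfc, hfib⟩ := hc
  exact ⟨f, hf, c.card_filter_le_eq_sizeUpTo hf.1 hfc hfib⟩

/-- `f` numbers the runs of the linear extension between consecutive descents. -/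
theorem exists_isPPart_of_mem_suppF {ω : α ≃ Fin n} {c : Composition n} (hc : c ∈ suppF ω) :
    ∃ f, IsPPart (fun p => (ω p : ℕ)) f ∧ ∀ m, #{p | f p ≤ m} = c.sizeUpTo m := by
  obtain ⟨_, ⟨e, he, rfl⟩, hDes⟩ := hc
  refine ⟨fun p => c.index (e.symm p) + 1,
    ⟨fun _ => Nat.le_add_left _ _, fun a b hab => ?_, fun a b hab hω => ?_⟩, fun m => ?_⟩
  · exact Nat.succ_le_succ (c.index_mono (he _ _ (by simpa using hab)).le)
  · obtain ⟨d, hd, had, hdb⟩ := exists_mem_Des_of_lt (fun i => ω (e i))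
      (he (e.symm a) (e.symm b) (by simpa using hab)).le (by simpa using hω)
    rw [← hDes, mem_compS_iff] at hd
    obtain ⟨-, -, k, rfl⟩ := hd
    have h1 := (c.index_lt_iff _ k).2 had
    have h2 : k ≤ c.index (e.symm b) := not_lt.1 fun h => ((c.index_lt_iff _ k).1 h).not_ge hdb
    simp only
    omega
  · rw [← c.card_index_lt m]
    exact card_equiv e.symm fun p => by simp only [mem_filter, mem_univ, true_and]; omega

theorem exists_mem_suppM_sizeUpTo_eq [Nonempty α] (ω : α ≃ Fin n) :
    ∃ c ∈ suppM ω, ∀ m, c.sizeUpTo m = #{p | jumpOf (fun p => (ω p : ℕ)) p < m} := by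
  set ω' : α → ℕ := fun p => ω p
  have hpos : ∀ k ∈ jumpBlocks ω', 0 < k := by
    simp only [jumpBlocks, List.mem_map, List.mem_range]
    rintro _ ⟨i, hi, rfl⟩
    obtain ⟨b, hb⟩ := exists_jumpOf_eq ω' (i := i) (by omega)
    exact (Set.ncard_pos (Set.toFinite _)).2 ⟨b, hb⟩
  have hsum : (jumpBlocks ω').sum = n := by
    rw [← List.take_length (l := jumpBlocks ω'), sum_take_jumpBlocks, ← Fintype.card_fin n,
      ← Fintype.card_congr ω, ← card_univ]
    congr 1
    ext b
    have := jumpOf_le_maxJump ω' b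
    simp only [jumpBlocks, List.length_map, List.length_range, mem_filter, mem_univ, true_and,
      iff_true]
    omega
  refine ⟨⟨jumpBlocks ω', hpos _, hsum⟩, ⟨fun b => jumpOf ω' b + 1,
    isPPart_jumpOf_add_one (Fin.val_injective.comp ω.injective), fun b => ?_, fun i => ?_⟩,
    sum_take_jumpBlocks ω'⟩
  · have := jumpOf_le_maxJump ω' b
    simp only [Composition.length, jumpBlocks, List.length_map, List.length_range]
    omega
  · simp only [Composition.blocksFun, add_left_inj, List.get_eq_getElem]
    exact (getElem_jumpBlocks ω' _).symm

theorem exists_isLinext_strictMono_jumpKey (ω : α ≃ Fin n) :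
    ∃ e : Fin n ≃ α, IsLinext e ∧ StrictMono (jumpKey (fun p => (ω p : ℕ)) ∘ e) := by
  have hω : Function.Injective fun p => (ω p : ℕ) := Fin.val_injective.comp ω.injective
  let e : Fin n ≃ α := (Tuple.sort (jumpKey (fun p => (ω p : ℕ)) ∘ ω.symm)).trans ω.symm
  have hmono : StrictMono (jumpKey (fun p => (ω p : ℕ)) ∘ e) :=
    (Tuple.monotone_sort (jumpKey (fun p => (ω p : ℕ)) ∘ ω.symm)).strictMono_of_injective
      ((jumpKey_injective hω).comp e.injective)
  exact ⟨e, fun i j h => hmono.lt_iff_lt.1 (jumpKey_strictMono hω h), hmono⟩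

theorem exists_mem_suppF_card_jumpOf_lt_le (ω : α ≃ Fin n) :
    ∃ c ∈ suppF ω, ∀ m, #{p | jumpOf (fun p => (ω p : ℕ)) p < m} ≤ c.sizeUpTo m := by
  set ω' : α → ℕ := fun p => ω p
  obtain ⟨e, hlin, hmono⟩ := exists_isLinext_strictMono_jumpKey ω
  obtain ⟨c, hc⟩ := exists_compS_eq (Des_subset_Ioo fun i => ω (e i))
  refine ⟨c, ⟨_, ⟨e, hlin, rfl⟩, hc⟩, fun m => ?_⟩
  have hidx : ∀ j, (c.index j : ℕ) ≤ jumpOf ω' (e j) := by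
    refine c.index_le_of_lt_at_compS (fun i j hij => ?_) fun i j hij hj => ?_
    · exact jumpOf_le_of_jumpKey_le (hmono.monotone hij)
    · obtain ⟨i, hi⟩ := i
      obtain ⟨j, hj'⟩ := j
      simp only at hij hj
      subst hij
      rw [hc, succ_mem_Des_iff _ hj'] at hj
      exact jumpOf_lt_of_jumpKey_lt (hmono (Fin.mk_lt_mk.2 (Nat.lt_succ_self i))) hj
  calc #{p | jumpOf ω' p < m} = #{j | jumpOf ω' (e j) < m} :=
        card_equiv e.symm fun p => by simp
    _ ≤ #{j | (c.index j : ℕ) < m} :=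
        card_le_card (monotone_filter_right _ fun j _ hj => (hidx j).trans_lt hj)
    _ = c.sizeUpTo m := c.card_index_lt m

end Supports

/-- `M`-support containment (in particular, `F`-support containment)
implies `jump(P,ω) ≤_dom jump(Q,τ)`. -/
theorem stmt_8 {α β : Type*} [PartialOrder α] [PartialOrder β] [Fintype α] [Fintype β]
    {n : ℕ} (ω : α ≃ Fin n) (τ : β ≃ Fin n) :
    (suppM ω ⊆ suppM τ →
      ∀ m : ℕ, ((jumpBlocks fun p => ((ω p : ℕ))).take m).sum ≤
        ((jumpBlocks fun p => ((τ p : ℕ))).take m).sum) ∧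
    (suppF ω ⊆ suppF τ →
      ∀ m : ℕ, ((jumpBlocks fun p => ((ω p : ℕ))).take m).sum ≤
        ((jumpBlocks fun p => ((τ p : ℕ))).take m).sum) := by
  simp only [sum_take_jumpBlocks]
  refine ⟨fun h m => ?_, fun h m => ?_⟩
  · cases isEmpty_or_nonempty α
    · simp
    obtain ⟨c, hc, hcω⟩ := exists_mem_suppM_sizeUpTo_eq ω
    obtain ⟨f, hf, hfc⟩ := exists_isPPart_of_mem_suppM (h hc)
    exact (hcω m).symm.le.trans (sizeUpTo_le_card_jumpOf_lt hf hfc m)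
  · obtain ⟨c, hc, hcω⟩ := exists_mem_suppF_card_jumpOf_lt_le ω
    obtain ⟨f, hf, hfc⟩ := exists_isPPart_of_mem_suppF (h hc)
    exact (hcω m).trans (sizeUpTo_le_card_jumpOf_lt hf hfc m)
end

section
/- Suppose labeled posets (P,ω) and (Q,τ) satisfy supp_M(P,ω) ⊆ supp_M(Q,τ). Then for every i ≥ 1, the maximum cardinality of a union of i weak convex subposets of (P,ω) is less than or equal to the maximum cardinality of a union of i weak convex subposets of (Q,τ). -/
open scoped BigOperators

/-!
Let `U` be the union of `i` weak convex subposets `T j`. A weak convex set contains no two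
elements with a strict edge between them, so a chain of elements of `U`, any two of which have a
strict edge between them, has at most `i` elements. Grading `P` by the longest such chain below
each element, and refining every grade along strict edges, gives a `(P,ω)`-partition that takes
at most `i` values on `U`. Once its values are renumbered `1, …, k`, its fibre sizes form a
composition in `supp_M(P,ω) ⊆ supp_M(Q,τ)`, so some `(Q,τ)`-partition has the same fibre sizes.
Fibres of a `(Q,τ)`-partition are weak convex, and the `≤ i` fibres matching those that cover `U`
have at least `|U|` elements in total.
-/

section StrictEdgeBetween

variable {α : Type*} [PartialOrder α] {w : α → ℕ}

def StrictEdgeBetween (w : α → ℕ) (a b : α) : Prop :=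
  ∃ x y, x ⋖ y ∧ w y < w x ∧ a ≤ x ∧ y ≤ b

theorem StrictEdgeBetween.lt {a b : α} (h : StrictEdgeBetween w a b) : a < b := by
  obtain ⟨x, y, hxy, -, hax, hyb⟩ := h
  exact hax.trans_lt (hxy.lt.trans_le hyb)

theorem StrictEdgeBetween.trans_le {a b c : α} (h : StrictEdgeBetween w a b) (hbc : b ≤ c) :
    StrictEdgeBetween w a c := by
  obtain ⟨x, y, hxy, hw, hax, hyb⟩ := h
  exact ⟨x, y, hxy, hw, hax, hyb.trans hbc⟩

theorem LE.le.trans_strictEdgeBetween {a b c : α} (hab : a ≤ b) (h : StrictEdgeBetween w b c) :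
    StrictEdgeBetween w a c := by
  obtain ⟨x, y, hxy, hw, hbx, hyc⟩ := h
  exact ⟨x, y, hxy, hw, hab.trans hbx, hyc⟩

/-- Along a saturated chain from `a` to `b` made of weak edges only the labels increase, so a
label descent `w b < w a` forces a strict edge in between. -/
theorem strictEdgeBetween_of_lt [Finite α] (hw : Function.Injective w) {a b : α} (hab : a < b)
    (hwab : w b < w a) : StrictEdgeBetween w a b := by
  induction b using WellFoundedLT.induction with
  | _ b ih =>
    obtain ⟨c, hac, hcb⟩ := exists_le_covBy_of_lt hab
    rcases lt_or_gt_of_ne (hw.ne hcb.ne') with hwbc | hwcb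
    · exact ⟨c, b, hcb, hwbc, hac, le_rfl⟩
    · have hwca : w c < w a := hwcb.trans hwab
      exact (ih c hcb.lt (hac.lt_of_ne (by rintro rfl; exact hwca.false)) hwca).trans_le hcb.le

theorem IsWeakConvex.not_strictEdgeBetween {T : Set α} (hT : IsWeakConvex w T) {a b : α}
    (ha : a ∈ T) (hb : b ∈ T) : ¬ StrictEdgeBetween w a b := by
  rintro ⟨x, y, hxy, hw, hax, hyb⟩
  have hx : x ∈ T := hax.eq_or_lt.elim (· ▸ ha) fun h => hT.1 h (hxy.lt.trans_le hyb) ha hb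
  have hy : y ∈ T := hyb.lt_or_eq.elim (fun h => hT.1 (hax.trans_lt hxy.lt) h ha hb) (· ▸ hb)
  exact (hT.2 x hx y hy hxy).not_gt hw

theorem IsChain.card_le_of_subset_iUnion {i : ℕ} {T : Fin i → Set α}
    (hT : ∀ j, IsWeakConvex w (T j)) {C : Finset α} (hC : IsChain (StrictEdgeBetween w) (C : Set α))
    (hCT : ∀ x ∈ C, x ∈ ⋃ j, T j) : C.card ≤ i := by
  choose J hJ using fun x : C => Set.mem_iUnion.mp (hCT x x.2)
  have hJinj : Function.Injective J := by
    intro x y hxy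
    by_contra hne
    have hy : (y : α) ∈ T (J x) := hxy ▸ hJ y
    rcases hC x.2 y.2 (Subtype.coe_ne_coe.mpr hne) with h | h
    · exact (hT (J x)).not_strictEdgeBetween (hJ x) hy h
    · exact (hT (J x)).not_strictEdgeBetween hy (hJ x) h
  simpa using Fintype.card_le_of_injective J hJinj

end StrictEdgeBetween

section ChainHeight

variable {α : Type*} [PartialOrder α] [Fintype α] {w : α → ℕ}

open Classical in
noncomputable def strictChainsBelow (w : α → ℕ) (Q : α → Prop) (p : α) : Finset (Finset α) :=
  Finset.univ.filter fun C : Finset α =>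
    IsChain (StrictEdgeBetween w) (C : Set α) ∧ ∀ x ∈ C, Q x ∧ x ≤ p

theorem mem_strictChainsBelow {Q : α → Prop} {p : α} {C : Finset α} :
    C ∈ strictChainsBelow w Q p ↔
      IsChain (StrictEdgeBetween w) (C : Set α) ∧ ∀ x ∈ C, Q x ∧ x ≤ p := by
  simp [strictChainsBelow]

noncomputable def chainHeight (w : α → ℕ) (Q : α → Prop) (p : α) : ℕ :=
  (strictChainsBelow w Q p).sup Finset.card

theorem card_le_chainHeight {Q : α → Prop} {p : α} {C : Finset α}
    (hC : IsChain (StrictEdgeBetween w) (C : Set α)) (hCp : ∀ x ∈ C, Q x ∧ x ≤ p) :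
    C.card ≤ chainHeight w Q p :=
  Finset.le_sup (mem_strictChainsBelow.mpr ⟨hC, hCp⟩)

theorem exists_card_eq_chainHeight (Q : α → Prop) (p : α) :
    ∃ C : Finset α, IsChain (StrictEdgeBetween w) (C : Set α) ∧ (∀ x ∈ C, Q x ∧ x ≤ p) ∧
      C.card = chainHeight w Q p := by
  obtain ⟨C, hC, hsup⟩ := Finset.exists_mem_eq_sup (strictChainsBelow w Q p)
    ⟨∅, mem_strictChainsBelow.mpr ⟨by simp, by simp⟩⟩ Finset.card
  obtain ⟨hchain, hCp⟩ := mem_strictChainsBelow.mp hC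
  exact ⟨C, hchain, hCp, by rw [chainHeight, hsup]⟩

theorem chainHeight_le_card (Q : α → Prop) (p : α) : chainHeight w Q p ≤ Fintype.card α := by
  obtain ⟨C, -, -, hC⟩ := exists_card_eq_chainHeight (w := w) Q p
  exact hC ▸ C.card_le_univ

theorem one_le_chainHeight {Q : α → Prop} {p : α} (hp : Q p) : 1 ≤ chainHeight w Q p :=
  card_le_chainHeight (C := {p}) (by simp [IsChain]) (by simpa using hp)

theorem chainHeight_mono (Q : α → Prop) {p q : α} (hpq : p ≤ q) :
    chainHeight w Q p ≤ chainHeight w Q q := by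
  obtain ⟨C, hchain, hCp, hC⟩ := exists_card_eq_chainHeight (w := w) Q p
  exact hC ▸ card_le_chainHeight hchain fun x hx => ⟨(hCp x hx).1, (hCp x hx).2.trans hpq⟩

theorem chainHeight_lt {Q : α → Prop} {p q : α} (hq : Q q) (hpq : StrictEdgeBetween w p q) :
    chainHeight w Q p < chainHeight w Q q := by
  classical
  obtain ⟨C, hchain, hCp, hC⟩ := exists_card_eq_chainHeight (w := w) Q p
  have hqC : q ∉ C := fun h => (hCp q h).2.not_gt hpq.lt
  have hchain' : IsChain (StrictEdgeBetween w) (insert q C : Finset α) := by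
    rw [Finset.coe_insert]
    exact hchain.insert fun x hx _ => Or.inr ((hCp x hx).2.trans_strictEdgeBetween hpq)
  have := card_le_chainHeight hchain' (Q := Q) (p := q) <| by
    simpa [hq] using fun x hx => ⟨(hCp x hx).1, (hCp x hx).2.trans hpq.lt.le⟩
  rw [Finset.card_insert_of_notMem hqC, hC] at this
  omega

end ChainHeight

section Layered

variable {α : Type*} [PartialOrder α] [Fintype α] {w : α → ℕ}

theorem chainHeight_iUnion_le {i : ℕ} {T : Fin i → Set α} (hT : ∀ j, IsWeakConvex w (T j))
    (p : α) : chainHeight w (· ∈ ⋃ j, T j) p ≤ i := by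
  obtain ⟨C, hC, hCp, hcard⟩ := exists_card_eq_chainHeight (w := w) (· ∈ ⋃ j, T j) p
  exact hcard ▸ hC.card_le_of_subset_iUnion hT fun x hx => (hCp x hx).1

/-- The level `chainHeight w (· ∈ U) p` is weighted so heavily that it dominates; within a level
the second summand climbs along strict edges, yet it is `1` on all of `U`, so `layeredPart w U`
takes at most one value on `U` per level. -/
noncomputable def layeredPart (w : α → ℕ) (U : Set α) (p : α) : ℕ :=
  (Fintype.card α + 1) * chainHeight w (· ∈ U) p +
    chainHeight w (fun x => chainHeight w (· ∈ U) x = chainHeight w (· ∈ U) p) p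

variable {U : Set α}

theorem layeredPart_lt_of_chainHeight_lt {a b : α}
    (h : chainHeight w (· ∈ U) a < chainHeight w (· ∈ U) b) :
    layeredPart w U a < layeredPart w U b := by
  have hle := chainHeight_le_card (w := w)
    (fun x => chainHeight w (· ∈ U) x = chainHeight w (· ∈ U) a) a
  calc layeredPart w U a < (Fintype.card α + 1) * (chainHeight w (· ∈ U) a + 1) := by
        rw [layeredPart, mul_add_one]; omega
    _ ≤ (Fintype.card α + 1) * chainHeight w (· ∈ U) b := Nat.mul_le_mul_left _ h
    _ ≤ layeredPart w U b := Nat.le_add_right _ _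

theorem layeredPart_mono {a b : α} (hab : a ≤ b) : layeredPart w U a ≤ layeredPart w U b := by
  rcases (chainHeight_mono (w := w) (· ∈ U) hab).lt_or_eq with h | h
  · exact (layeredPart_lt_of_chainHeight_lt h).le
  · rw [layeredPart, layeredPart, h]
    exact Nat.add_le_add_left (chainHeight_mono _ hab) _

theorem layeredPart_lt_of_strictEdgeBetween {a b : α} (hab : StrictEdgeBetween w a b) :
    layeredPart w U a < layeredPart w U b := by
  rcases (chainHeight_mono (w := w) (· ∈ U) hab.lt.le).lt_or_eq with h | h
  · exact layeredPart_lt_of_chainHeight_lt h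
  · rw [layeredPart, layeredPart, h]
    exact Nat.add_lt_add_left
      (chainHeight_lt (Q := fun x => chainHeight w (· ∈ U) x = chainHeight w (· ∈ U) b) rfl hab) _

theorem isPPart_layeredPart (hw : Function.Injective w) : IsPPart w (layeredPart w U) :=
  ⟨fun p => (one_le_chainHeight (w := w)
      (Q := fun x => chainHeight w (· ∈ U) x = chainHeight w (· ∈ U) p) rfl).trans
      (Nat.le_add_left _ _),
    fun _ _ hab => layeredPart_mono hab.le,
    fun _ _ hab hwab => layeredPart_lt_of_strictEdgeBetween (strictEdgeBetween_of_lt hw hab hwab)⟩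

theorem layeredPart_of_mem {u : α} (hu : u ∈ U) :
    layeredPart w U u = (Fintype.card α + 1) * chainHeight w (· ∈ U) u + 1 := by
  obtain ⟨C, hC, hCu, hcard⟩ := exists_card_eq_chainHeight (w := w)
    (fun x => chainHeight w (· ∈ U) x = chainHeight w (· ∈ U) u) u
  have hC1 : C.card ≤ 1 := by
    refine Finset.card_le_one.mpr fun a ha b hb => by_contra fun hne => ?_
    have key : ∀ {x y : α}, x ∈ C → y ∈ C → ¬ StrictEdgeBetween w x y := fun hx hy hxy =>
      ((chainHeight_lt hu (hxy.trans_le (hCu _ hy).2)).trans_eq (hCu _ hx).1.symm).false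
    exact (hC ha hb hne).elim (key ha hb) (key hb ha)
  rw [layeredPart, ← hcard, le_antisymm hC1 (hcard ▸ one_le_chainHeight rfl)]

theorem exists_isPPart_iUnion_subset_preimage (hw : Function.Injective w) {i : ℕ}
    {T : Fin i → Set α}
    (hT : ∀ j, IsWeakConvex w (T j)) :
    ∃ f, IsPPart w f ∧ ∃ V : Finset ℕ, V.card ≤ i ∧ ⋃ j, T j ⊆ f ⁻¹' V := by
  refine ⟨layeredPart w (⋃ j, T j), isPPart_layeredPart hw,
    (Finset.Icc 1 i).image fun k => (Fintype.card α + 1) * k + 1, ?_, fun u hu => ?_⟩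
  · simpa using Finset.card_image_le (s := Finset.Icc 1 i)
  · rw [Set.mem_preimage, layeredPart_of_mem hu, Finset.mem_coe, Finset.mem_image]
    exact ⟨_, Finset.mem_Icc.mpr ⟨one_le_chainHeight hu, chainHeight_iUnion_le hT u⟩, rfl⟩

end Layered

section ValueRank

variable {α : Type*} [Fintype α] (f : α → ℕ)

def valueRank (v : ℕ) : ℕ :=
  ((Finset.univ.image f).filter (· ≤ v)).card

theorem valueRank_mono : Monotone (valueRank f) :=
  fun _ _ huv => Finset.card_le_card (Finset.monotone_filter_right _ fun _ _ hx => hx.trans huv)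

theorem valueRank_lt_valueRank {u : ℕ} {q : α} (h : u < f q) :
    valueRank f u < valueRank f (f q) := by
  refine Finset.card_lt_card (Finset.ssubset_iff_of_subset ?_ |>.mpr ⟨f q, ?_, ?_⟩)
  · exact Finset.monotone_filter_right _ fun _ _ hx => hx.trans h.le
  · simp
  · simpa using h

theorem one_le_valueRank (p : α) : 1 ≤ valueRank f (f p) :=
  Finset.card_pos.mpr ⟨f p, by simp⟩

theorem valueRank_le_card (v : ℕ) : valueRank f v ≤ (Finset.univ.image f).card :=
  Finset.card_le_card (Finset.filter_subset _ _)

theorem image_valueRank_comp :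
    Finset.univ.image (valueRank f ∘ f) = Finset.Icc 1 (Finset.univ.image f).card := by
  have hsub : Finset.univ.image (valueRank f ∘ f) ⊆ Finset.Icc 1 (Finset.univ.image f).card := by
    simp only [Finset.subset_iff, Finset.mem_image, Finset.mem_univ, true_and,
      Function.comp_apply, Finset.mem_Icc, forall_exists_index, forall_apply_eq_imp_iff]
    exact fun p => ⟨one_le_valueRank f p, valueRank_le_card f _⟩
  refine Finset.eq_of_subset_of_card_le hsub ?_
  rw [Nat.card_Icc, add_tsub_cancel_right, ← Finset.image_image]
  refine (Finset.card_image_of_injOn ?_).ge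
  intro u hu v hv huv
  obtain ⟨p, -, rfl⟩ := Finset.mem_image.mp hu
  obtain ⟨q, -, rfl⟩ := Finset.mem_image.mp hv
  by_contra hne
  rcases lt_or_gt_of_ne hne with h | h
  · exact (valueRank_lt_valueRank f h).ne huv
  · exact (valueRank_lt_valueRank f h).ne' huv

end ValueRank

theorem IsPPart.valueRank_comp {α : Type*} [PartialOrder α] [Fintype α] {w f : α → ℕ}
    (hf : IsPPart w f) : IsPPart w (valueRank f ∘ f) :=
  ⟨one_le_valueRank f, fun a b hab => valueRank_mono f (hf.2.1 a b hab),
    fun a b hab hwab => valueRank_lt_valueRank f (hf.2.2 a b hab hwab)⟩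

theorem ncard_preimage_eq_sum {β : Type*} [Fintype β] (g : β → ℕ) (V : Finset ℕ) :
    (g ⁻¹' V).ncard = ∑ v ∈ V, {q | g q = v}.ncard := by
  classical
  simp only [Set.ncard_eq_toFinset_card', Set.toFinset_ofPred, Set.preimage, Finset.mem_coe]
  rw [Finset.card_eq_sum_card_fiberwise (f := g) (t := V) fun q hq => by simpa using hq]
  refine Finset.sum_congr rfl fun v hv => congrArg Finset.card ?_
  ext q
  simp +contextual [hv]

section Transfer

variable {α β : Type*} [PartialOrder α] [PartialOrder β] [Fintype α] {n : ℕ}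
  {ω : α ≃ Fin n} {τ : β ≃ Fin n}

noncomputable def fiberComposition (f : α → ℕ) (k : ℕ)
    (hf : Finset.univ.image f = Finset.Icc 1 k) (hn : Fintype.card α = n) : Composition n where
  blocks := List.ofFn fun j : Fin k => {p | f p = j + 1}.ncard
  blocks_pos hj := by
    obtain ⟨j, rfl⟩ := List.mem_ofFn.mp hj
    obtain ⟨p, -, hp⟩ := Finset.mem_image.mp (hf ▸ Finset.mem_Icc.mpr ⟨le_add_self, j.2⟩)
    exact (Set.ncard_pos (Set.toFinite _)).mpr ⟨p, hp⟩
  blocks_sum := by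
    classical
    rw [List.sum_ofFn, Fin.sum_univ_eq_sum_range (fun j => {p | f p = j + 1}.ncard), ← hn,
      ← Finset.card_univ, Finset.card_eq_sum_card_fiberwise (t := Finset.Icc 1 k) (f := f)
        fun p _ => hf ▸ Finset.mem_image_of_mem f (Finset.mem_univ p),
      Finset.range_eq_Ico, Finset.sum_Ico_add' (fun v => {p | f p = v}.ncard),
      ← Finset.Ico_add_one_right_eq_Icc, zero_add]
    refine Finset.sum_congr rfl fun v _ => ?_
    rw [Set.ncard_eq_toFinset_card', Set.toFinset_ofPred]

theorem exists_isPPart_fiber_ncard_eq (h : suppM ω ⊆ suppM τ) {f : α → ℕ}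
    (hf : IsPPart (fun p => (ω p : ℕ)) f) {k : ℕ} (hk : Finset.univ.image f = Finset.Icc 1 k) :
    ∃ g : β → ℕ, IsPPart (fun q => (τ q : ℕ)) g ∧
      ∀ v, {q | g q = v}.ncard = {p | f p = v}.ncard := by
  have hrange : ∀ p, f p ∈ Finset.Icc 1 k :=
    fun p => hk ▸ Finset.mem_image_of_mem f (Finset.mem_univ p)
  let c := fiberComposition f k hk (by simpa using Fintype.card_congr ω)
  have hlen : c.length = k := List.length_ofFn
  have hblocks : ∀ j : Fin c.length, c.blocksFun j = {p | f p = j + 1}.ncard :=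
    fun j => List.get_ofFn _ j
  obtain ⟨g, hg, hgle, hgfib⟩ := h ⟨f, hf, fun p => hlen ▸ (Finset.mem_Icc.mp (hrange p)).2,
    fun j => (hblocks j).symm⟩
  refine ⟨g, hg, fun v => ?_⟩
  by_cases hv : v ∈ Finset.Icc 1 k
  · obtain ⟨hv1, hvk⟩ := Finset.mem_Icc.mp hv
    obtain ⟨j, rfl⟩ : ∃ j : Fin c.length, (j : ℕ) + 1 = v := ⟨⟨v - 1, by omega⟩, by simp; omega⟩
    rw [hgfib j, hblocks j]
  · have hf0 : {p | f p = v} = ∅ :=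
      Set.eq_empty_of_forall_notMem fun p hp => hv (hp ▸ hrange p)
    have hg0 : {q | g q = v} = ∅ := Set.eq_empty_of_forall_notMem fun q hq =>
      hv (Finset.mem_Icc.mpr ⟨hq ▸ hg.1 q, hq ▸ hlen ▸ hgle q⟩)
    rw [hf0, hg0, Set.ncard_empty, Set.ncard_empty]

theorem exists_isPPart_preimage_ncard_le [Fintype β] (h : suppM ω ⊆ suppM τ) {f : α → ℕ}
    (hf : IsPPart (fun p => (ω p : ℕ)) f) (V : Finset ℕ) :
    ∃ g : β → ℕ, IsPPart (fun q => (τ q : ℕ)) g ∧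
      ∃ V' : Finset ℕ, V'.card ≤ V.card ∧ (f ⁻¹' V).ncard ≤ (g ⁻¹' V').ncard := by
  obtain ⟨g, hg, hfib⟩ := exists_isPPart_fiber_ncard_eq h hf.valueRank_comp (image_valueRank_comp f)
  refine ⟨g, hg, V.image (valueRank f), Finset.card_image_le, ?_⟩
  calc (f ⁻¹' V).ncard ≤ ((valueRank f ∘ f) ⁻¹' (V.image (valueRank f))).ncard :=
        Set.ncard_le_ncard fun p hp => by simpa using ⟨f p, hp, rfl⟩
    _ = (g ⁻¹' (V.image (valueRank f))).ncard := by
        simp only [ncard_preimage_eq_sum, hfib]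

end Transfer

section WeakConvexFibers

variable {α : Type*} [PartialOrder α] {w : α → ℕ} {g : α → ℕ}

theorem IsPPart.isWeakConvex_preimage (hw : Function.Injective w) (hg : IsPPart w g)
    {s : Set ℕ} (hs : s.Subsingleton) : IsWeakConvex w (g ⁻¹' s) := by
  refine ⟨fun x y z hxy hyz hx hz => ?_, fun a ha b hb hab => ?_⟩
  · have hxz : g x = g z := hs hx hz
    have : g y = g x := le_antisymm (hxz ▸ hg.2.1 y z hyz) (hg.2.1 x y hxy)
    rwa [Set.mem_preimage, this]
  · refine (lt_or_gt_of_ne (hw.ne hab.lt.ne)).resolve_right fun hba => ?_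
    exact (hg.2.2 a b hab.lt hba).ne (hs ha hb)

theorem IsPPart.exists_weakConvex_iUnion_eq_preimage (hw : Function.Injective w)
    (hg : IsPPart w g) {i : ℕ} (V : Finset ℕ) (hV : V.card ≤ i) :
    ∃ T : Fin i → Set α, (∀ j, IsWeakConvex w (T j)) ∧ ⋃ j, T j = g ⁻¹' V := by
  obtain ⟨e⟩ := Function.Embedding.nonempty_of_card_le (α := V) (β := Fin i) (by simpa using hV)
  refine ⟨fun j => g ⁻¹' {v | ∃ hv : v ∈ V, e ⟨v, hv⟩ = j}, fun j => ?_, ?_⟩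
  · refine hg.isWeakConvex_preimage hw ?_
    rintro u ⟨hu, rfl⟩ v ⟨hv, hvu⟩
    exact congrArg Subtype.val (e.injective hvu.symm)
  · ext q
    simp

end WeakConvexFibers

theorem stmt_10_general {α β : Type*} [PartialOrder α] [PartialOrder β] [Fintype α] [Fintype β]
    {n : ℕ} (ω : α ≃ Fin n) (τ : β ≃ Fin n) (h : suppM ω ⊆ suppM τ)
    (i : ℕ) :
    sSup {m | ∃ T : Fin i → Set α,
        (∀ j, IsWeakConvex (fun p => ((ω p : ℕ))) (T j)) ∧ (⋃ j, T j).ncard = m} ≤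
      sSup {m | ∃ T : Fin i → Set β,
        (∀ j, IsWeakConvex (fun p => ((τ p : ℕ))) (T j)) ∧ (⋃ j, T j).ncard = m} := by
  refine csSup_le
    ⟨0, fun _ => ∅, fun _ => ⟨fun _ _ _ _ _ hx _ => hx, fun _ h => h.elim⟩, by simp⟩ ?_
  rintro _ ⟨T, hT, rfl⟩
  obtain ⟨f, hf, V, hV, hTV⟩ :=
    exists_isPPart_iUnion_subset_preimage (Fin.val_injective.comp ω.injective) hT
  obtain ⟨g, hg, V', hV', hfg⟩ := exists_isPPart_preimage_ncard_le h hf V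
  obtain ⟨T', hT', hT'g⟩ :=
    hg.exists_weakConvex_iUnion_eq_preimage (Fin.val_injective.comp τ.injective) V' (hV'.trans hV)
  calc (⋃ j, T j).ncard ≤ (f ⁻¹' V).ncard := Set.ncard_le_ncard hTV
    _ ≤ (g ⁻¹' V').ncard := hfg
    _ = (⋃ j, T' j).ncard := by rw [hT'g]
    _ ≤ _ := by
      refine le_csSup ⟨Nat.card β, ?_⟩ ⟨T', hT', rfl⟩
      rintro _ ⟨-, -, rfl⟩
      exact Set.ncard_le_card _

/-- under `M`-support containment, for every `i ≥ 1` the maximum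
cardinality of a union of `i` weak convex subposets of `(P,ω)` is at most that
of `(Q,τ)`. -/
theorem stmt_10 {α β : Type*} [PartialOrder α] [PartialOrder β] [Fintype α] [Fintype β]
    {n : ℕ} (ω : α ≃ Fin n) (τ : β ≃ Fin n) (h : suppM ω ⊆ suppM τ)
    (i : ℕ) (hi : 1 ≤ i) :
    sSup {m | ∃ T : Fin i → Set α,
        (∀ j, IsWeakConvex (fun p => ((ω p : ℕ))) (T j)) ∧ (⋃ j, T j).ncard = m} ≤
      sSup {m | ∃ T : Fin i → Set β,
        (∀ j, IsWeakConvex (fun p => ((τ p : ℕ))) (T j)) ∧ (⋃ j, T j).ncard = m} :=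
  stmt_10_general ω τ h i
end

section
/- Let P and Q be partial orders on the same finite set X. Then S_<(P) ⊇ S_<(Q) if and only if there is a finite sequence of partial orders P = P_0, P_1, …, P_m = Q on X such that for each j, S_<(P_{j+1}) = S_<(P_j) ∖ {(a_j, b_j)} for some cover relation a_j ⋖_{P_j} b_j of P_j. -/
open scoped BigOperators

/-! In a finite poset `<` is the transitive closure of the cover relation `⋖`. Hence if
`S_<(Q) ⊊ S_<(P)`, transitivity of `<_Q` forces some cover `a ⋖_P b` to lie outside `S_<(Q)`.
Deleting a cover from `S_<(P)` leaves a strict order, which still contains `S_<(Q)`, so we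
conclude by induction on `|S_<(P) ∖ S_<(Q)|`. Conversely every deletion shrinks `S_<`. -/

section CoverDeletion

variable {X : Type*}

theorem exists_covBy_not_of_lt [Preorder X] [LocallyFiniteOrder X] {r : X → X → Prop}
    [IsTrans X r] {a b : X} (hab : a < b) (hnab : ¬ r a b) :
    ∃ c d : X, c ⋖ d ∧ ¬ r c d := by
  by_contra! hcov
  exact hnab <| Relation.transGen_eq_self (r := r) ▸
    Relation.TransGen.mono hcov _ _ (transGen_covBy_of_lt hab)

theorem Relation.reflTransGen_iff_exists_nat_seq {r : X → X → Prop} {a b : X} :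
    Relation.ReflTransGen r a b ↔
      ∃ (m : ℕ) (f : ℕ → X), f 0 = a ∧ f m = b ∧ ∀ j < m, r (f j) (f (j + 1)) := by
  constructor
  · intro h
    induction h using Relation.ReflTransGen.head_induction_on with
    | refl => exact ⟨0, fun _ => b, rfl, rfl, fun _ h => absurd h (Nat.not_lt_zero _)⟩
    | @head c d hcd _ ih =>
      obtain ⟨m, f, hf0, hfm, hf⟩ := ih
      refine ⟨m + 1, fun j => Nat.casesOn (motive := fun _ => X) j c f, rfl, hfm, fun j hj => ?_⟩
      cases j with
      | zero => exact (hf0 ▸ hcd :)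
      | succ j => exact hf j (by omega)
  · rintro ⟨m, f, rfl, rfl, hf⟩
    suffices ∀ k ≤ m, Relation.ReflTransGen r (f 0) (f k) from this m le_rfl
    intro k
    induction k with
    | zero => exact fun _ => .refl
    | succ k ih => exact fun hk => (ih (by omega)).tail (hf k (by omega))

def IsCoverDeletion (P P' : PartialOrder X) : Prop :=
  ∃ a b : X, (P.lt a b ∧ ∀ c : X, ¬ (P.lt a c ∧ P.lt c b)) ∧
    ∀ x y : X, P'.lt x y ↔ (P.lt x y ∧ (x, y) ≠ (a, b))

theorem IsCoverDeletion.lt_of_lt {P P' : PartialOrder X} (h : IsCoverDeletion P P') {x y : X}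
    (hxy : P'.lt x y) : P.lt x y := by
  obtain ⟨a, b, -, hlt⟩ := h
  exact ((hlt x y).1 hxy).1

namespace PartialOrder

/-- Removing `(a, b)` keeps the strict relation transitive exactly because nothing lies
strictly between `a` and `b`. -/
abbrev deleteCover (P : PartialOrder X) (a b : X) (hab : ∀ c, ¬ (P.lt a c ∧ P.lt c b)) :
    PartialOrder X :=
  letI := P
  haveI : IsStrictOrder X (fun x y => x < y ∧ (x, y) ≠ (a, b)) :=
    { irrefl := fun x h => lt_irrefl x h.1
      trans := fun x y z hxy hyz => ⟨hxy.1.trans hyz.1, by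
        rintro ⟨rfl, rfl⟩
        exact hab y ⟨hxy.1, hyz.1⟩⟩ }
  partialOrderOfSO (fun x y => x < y ∧ (x, y) ≠ (a, b))

theorem isCoverDeletion_deleteCover (P : PartialOrder X) {a b : X} (hab : P.lt a b)
    (hcov : ∀ c, ¬ (P.lt a c ∧ P.lt c b)) : IsCoverDeletion P (P.deleteCover a b hcov) :=
  ⟨a, b, ⟨hab, hcov⟩, fun _ _ => Iff.rfl⟩

end PartialOrder

theorem lt_of_lt_of_reflTransGen_isCoverDeletion {P Q : PartialOrder X}
    (h : Relation.ReflTransGen IsCoverDeletion P Q) {x y : X} (hxy : Q.lt x y) : P.lt x y := by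
  induction h with
  | refl => exact hxy
  | tail _ hstep ih => exact ih (hstep.lt_of_lt hxy)

theorem exists_cover_not_lt [Finite X] {P Q : PartialOrder X} {a b : X}
    (hab : P.lt a b) (hQab : ¬ Q.lt a b) :
    ∃ a' b' : X, P.lt a' b' ∧ (∀ c, ¬ (P.lt a' c ∧ P.lt c b')) ∧ ¬ Q.lt a' b' := by
  let _ := P
  let _ : LocallyFiniteOrder X := .ofFiniteIcc fun _ _ => Set.toFinite _
  have : IsTrans X Q.lt := ⟨fun _ _ _ => @lt_trans X Q.toPreorder _ _ _⟩
  obtain ⟨a', b', hcov, hQ⟩ := exists_covBy_not_of_lt hab hQab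
  exact ⟨a', b', hcov.1, fun c hc => hcov.2 hc.1 hc.2, hQ⟩

theorem reflTransGen_isCoverDeletion_of_lt_imp [Finite X] {P Q : PartialOrder X}
    (hQP : ∀ x y : X, Q.lt x y → P.lt x y) : Relation.ReflTransGen IsCoverDeletion P Q := by
  by_cases hPQ : ∀ x y : X, P.lt x y → Q.lt x y
  · obtain rfl : P = Q := PartialOrder.ext_lt fun x y => ⟨hPQ x y, hQP x y⟩
    exact .refl
  push Not at hPQ
  obtain ⟨a₀, b₀, hab₀, hQab₀⟩ := hPQ
  obtain ⟨a, b, hab, hcov, hQab⟩ := exists_cover_not_lt hab₀ hQab₀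
  have hQP' : ∀ x y : X, Q.lt x y → (P.deleteCover a b hcov).lt x y := fun x y hxy =>
    ⟨hQP x y hxy, by rintro ⟨rfl, rfl⟩; exact hQab hxy⟩
  exact .head (P.isCoverDeletion_deleteCover hab hcov)
    (reflTransGen_isCoverDeletion_of_lt_imp hQP')
termination_by {p : X × X | P.lt p.1 p.2 ∧ ¬ Q.lt p.1 p.2}.ncard
decreasing_by
  exact Set.ncard_lt_ncard
    ⟨fun p hp => ⟨hp.1.1, hp.2⟩, fun h => (h (a := (a, b)) ⟨hab, hQab⟩).1.2 rfl⟩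
    (Set.toFinite _)

end CoverDeletion

/-- `S_<(P) ⊇ S_<(Q)` iff `Q` is obtained from `P` by an ordered
sequence of deletions of cover relations. -/
theorem stmt_15 {X : Type*} [Fintype X] (P Q : PartialOrder X) :
    (∀ x y : X, Q.lt x y → P.lt x y) ↔
      ∃ (m : ℕ) (R : ℕ → PartialOrder X), R 0 = P ∧ R m = Q ∧
        ∀ j < m, ∃ a b : X,
          ((R j).lt a b ∧ ∀ c : X, ¬ ((R j).lt a c ∧ (R j).lt c b)) ∧
          ∀ x y : X, (R (j + 1)).lt x y ↔ ((R j).lt x y ∧ (x, y) ≠ (a, b)) :=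
  calc (∀ x y : X, Q.lt x y → P.lt x y) ↔ Relation.ReflTransGen IsCoverDeletion P Q :=
        ⟨reflTransGen_isCoverDeletion_of_lt_imp,
          fun h _ _ => lt_of_lt_of_reflTransGen_isCoverDeletion h⟩
    _ ↔ _ := Relation.reflTransGen_iff_exists_nat_seq
end

section
/- Let P be a finite poset with n elements, let E be a set of ordered pairs (a,b) of elements with a <_P b that contains all cover relations of P, and let ε : E → {weak, strict} be any assignment. Then there exists a bijection ω : P → {1,…,n} such that for every (a,b) ∈ E, ε(a,b) = weak if and only if ω(a) < ω(b), if and only if the relation D on P defined by a D b whenever ((a,b) ∈ E and ε(a,b) = weak) or ((b,a) ∈ E and ε(b,a) = strict) has no directed cycle (i.e., the transitive closure of D is irreflexive). -/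
open scoped BigOperators

/-! A labeling realizes the prescribed weak/strict types exactly when it is strictly increasing
along `D`. A strictly increasing map kills every directed cycle of `D`; conversely, if `D` is
acyclic its transitive closure is a strict order, and any linear extension of that order,
enumerated by `Fin n`, is the required labeling. -/

open Relation

theorem exists_equiv_fin_strictMono (β : Type*) [PartialOrder β] [Fintype β] :
    ∃ ω : β ≃ Fin (Fintype.card β), StrictMono ω := by
  let _ : Fintype (LinearExtension β) := ‹Fintype β›
  let e := monoEquivOfFin (LinearExtension β) rfl
  exact ⟨(Equiv.refl β).trans e.symm.toEquiv,
    e.symm.strictMono.comp <|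
      toLinearExtension.monotone.strictMono_of_injective Function.injective_id⟩

section Acyclic

variable {β : Type*} {r : β → β → Prop}

theorem not_transGen_self_of_lt {γ : Type*} [Preorder γ] (f : β → γ)
    (hf : ∀ a b, r a b → f a < f b) (x : β) : ¬ TransGen r x x := fun hx =>
  lt_irrefl (f x) <| transGen_minimal (r' := Function.onFun (· < ·) f) hf x x hx

theorem exists_equiv_fin_lt_of_acyclic [Fintype β] (hr : ∀ x, ¬ TransGen r x x) :
    ∃ ω : β ≃ Fin (Fintype.card β), ∀ a b, r a b → ω a < ω b := by
  have : IsStrictOrder β (TransGen r) := { irrefl := hr, trans := fun _ _ _ => TransGen.trans }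
  let _ := partialOrderOfSO (TransGen r)
  obtain ⟨ω, hω⟩ := exists_equiv_fin_strictMono β
  exact ⟨ω, fun a b hab => hω (TransGen.single hab)⟩

theorem exists_equiv_fin_lt_iff_acyclic [Fintype β] :
    (∃ ω : β ≃ Fin (Fintype.card β), ∀ a b, r a b → ω a < ω b) ↔ ∀ x, ¬ TransGen r x x :=
  ⟨fun ⟨ω, hω⟩ => not_transGen_self_of_lt ω hω, exists_equiv_fin_lt_of_acyclic⟩

end Acyclic

section SignedEdges

variable {α : Type*} (E : Set (α × α)) (ε : α × α → Bool)

/-- The relation `D`; `ε p = true` means that the edge `p` is weak. -/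
def signedEdgeRel (a b : α) : Prop :=
  ((a, b) ∈ E ∧ ε (a, b) = true) ∨ ((b, a) ∈ E ∧ ε (b, a) = false)

variable {E ε}

theorem forall_mem_iff_lt_iff_signedEdgeRel_lt {γ : Type*} [LinearOrder γ] {ω : α → γ}
    (hω : Function.Injective ω) (hE : ∀ p ∈ E, p.1 ≠ p.2) :
    (∀ p ∈ E, (ε p = true ↔ ω p.1 < ω p.2)) ↔
      ∀ a b, signedEdgeRel E ε a b → ω a < ω b := by
  constructor
  · rintro h a b (⟨hab, hweak⟩ | ⟨hba, hstrict⟩)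
    · exact (h _ hab).mp hweak
    · have hne : ω b ≠ ω a := hω.ne (hE _ hba)
      have hnlt : ¬ ω b < ω a := fun hlt => by simp [(h _ hba).mpr hlt] at hstrict
      exact lt_of_le_of_ne (not_lt.mp hnlt) hne.symm
  · rintro h ⟨a, b⟩ hab
    cases hε : ε (a, b)
    · simpa using (h b a (Or.inr ⟨hab, hε⟩)).le
    · simpa using h a b (Or.inl ⟨hab, hε⟩)

end SignedEdges

theorem stmt_17_general {α : Type*} [PartialOrder α] [Fintype α]
    (E : Set (α × α)) (hE1 : ∀ p ∈ E, p.1 < p.2)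
    (ε : α × α → Bool) :
    (∃ ω : α ≃ Fin (Fintype.card α),
        ∀ p ∈ E, (ε p = true ↔ ω p.1 < ω p.2)) ↔
      ∀ x : α, ¬ Relation.TransGen
        (fun a b : α => ((a, b) ∈ E ∧ ε (a, b) = true) ∨
          ((b, a) ∈ E ∧ ε (b, a) = false)) x x :=
  (exists_congr fun ω => forall_mem_iff_lt_iff_signedEdgeRel_lt ω.injective
    fun p hp => (hE1 p hp).ne).trans exists_equiv_fin_lt_iff_acyclic

/-- an assignment of weak/strict to a set of relations containing all
covers is consistent with a labeling iff it has no bad cycle. (`ε p = true` = weak.) -/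
theorem stmt_17 {α : Type*} [PartialOrder α] [Fintype α]
    (E : Set (α × α)) (hE1 : ∀ p ∈ E, p.1 < p.2)
    (hE2 : ∀ a b : α, a ⋖ b → (a, b) ∈ E)
    (ε : α × α → Bool) :
    (∃ ω : α ≃ Fin (Fintype.card α),
        ∀ p ∈ E, (ε p = true ↔ ω p.1 < ω p.2)) ↔
      ∀ x : α, ¬ Relation.TransGen
        (fun a b : α => ((a, b) ∈ E ∧ ε (a, b) = true) ∨
          ((b, a) ∈ E ∧ ε (b, a) = false)) x x :=
  stmt_17_general E hE1 ε
end

section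
/- Let I be a finite set with partial orders 𝒫 and 𝒬 such that every linear order on I extending 𝒫 also extends 𝒬. For each i ∈ I, let P_i and Q_i be partial orders on the same finite set X_i such that every linear order on X_i extending P_i also extends Q_i. Define the assembled partial order 𝒫[i→P_i] on the disjoint union ⨆_{i∈I} X_i by (j,p) ≤ (k,q) iff (j <_𝒫 k) or (j = k and p ≤_{P_j} q), and define 𝒬[i→Q_i] analogously. Then every linear order on ⨆_{i∈I} X_i extending 𝒫[i→P_i] also extends 𝒬[i→Q_i]. -/
open scoped BigOperators

/-
Every linear extension of `P` extends `Q` exactly when `Q ⊆ P` as relations: if `a ≤_P b`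
fails, adding the relation `b ≤ a` to `P` still gives a partial order, and any linear extension
of it (Szpilrajn) extends `P` but puts `b` strictly below `a`. Hence both hypotheses just say
`𝒬 ⊆ 𝒫` and `Q_i ⊆ P_i`, and the assembled order is monotone in its frame and components.
-/

section LinearExtension

variable {α : Type*}

theorem isPartialOrder_sup_edge [PartialOrder α] {a b : α} (hab : ¬ a ≤ b) :
    IsPartialOrder α (fun x y => x ≤ y ∨ (x ≤ b ∧ a ≤ y)) where
  refl x := Or.inl le_rfl
  trans := by
    rintro x y z (hxy | ⟨hxb, hay⟩) (hyz | ⟨hyb, haz⟩)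
    · exact Or.inl (hxy.trans hyz)
    · exact Or.inr ⟨hxy.trans hyb, haz⟩
    · exact Or.inr ⟨hxb, hay.trans hyz⟩
    · exact absurd (hay.trans hyb) hab
  antisymm := by
    rintro x y (hxy | ⟨hxb, hay⟩) (hyx | ⟨hyb, hax⟩)
    · exact le_antisymm hxy hyx
    · exact absurd (hax.trans (hxy.trans hyb)) hab
    · exact absurd (hay.trans (hyx.trans hxb)) hab
    · exact absurd (hay.trans hyb) hab

theorem exists_linearOrder_extends (r : α → α → Prop) [IsPartialOrder α r] :
    ∃ L : LinearOrder α, ∀ x y, r x y → L.le x y := by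
  obtain ⟨s, hs, hrs⟩ := extend_partialOrder r
  exact ⟨{ le := s
           le_refl := hs.refl
           le_trans := hs.trans
           le_antisymm := hs.antisymm
           le_total := hs.total
           toDecidableLE := Classical.decRel _ }, hrs⟩

theorem exists_linearOrder_extends_not_le [PartialOrder α] {a b : α} (hab : ¬ a ≤ b) :
    ∃ L : LinearOrder α, (∀ x y : α, x ≤ y → L.le x y) ∧ ¬ L.le a b := by
  have := isPartialOrder_sup_edge hab
  obtain ⟨L, hL⟩ := exists_linearOrder_extends fun x y : α => x ≤ y ∨ (x ≤ b ∧ a ≤ y)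
  refine ⟨L, fun x y hxy => hL x y (Or.inl hxy), fun hLab => hab ?_⟩
  have hLba : L.le b a := hL b a (Or.inr ⟨le_rfl, le_rfl⟩)
  exact (L.le_antisymm a b hLab hLba).le

theorem PartialOrder.le_of_forall_linearOrder_extends (P Q : PartialOrder α)
    (h : ∀ L : LinearOrder α, (∀ x y : α, P.le x y → L.le x y) →
      ∀ x y : α, Q.le x y → L.le x y) {x y : α} (hxy : Q.le x y) : P.le x y := by
  by_contra hP
  let := P
  obtain ⟨L, hPL, hL⟩ := exists_linearOrder_extends_not_le hP
  exact hL (h L hPL x y hxy)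

theorem PartialOrder.lt_of_lt_of_le_imp {P Q : PartialOrder α}
    (hQP : ∀ x y : α, Q.le x y → P.le x y) {x y : α} (hxy : Q.lt x y) : P.lt x y := by
  obtain ⟨hle, hnge⟩ := (Q.lt_iff_le_not_ge x y).mp hxy
  refine (P.lt_iff_le_not_ge x y).mpr ⟨hQP x y hle, fun hyx => hnge ?_⟩
  cases P.le_antisymm x y (hQP x y hle) hyx
  exact hle

end LinearExtension

theorem assembledLe_mono {I : Type*} {PP QQ : PartialOrder I} {X : I → Type*}
    {Pc Qc : ∀ i, PartialOrder (X i)} (hframe : ∀ x y : I, QQ.le x y → PP.le x y)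
    (hcomp : ∀ i, ∀ x y : X i, (Qc i).le x y → (Pc i).le x y) {x y : Σ i, X i}
    (hxy : assembledLe QQ Qc x y) : assembledLe PP Pc x y := by
  rcases hxy with hlt | ⟨e, hle⟩
  · exact Or.inl (PartialOrder.lt_of_lt_of_le_imp hframe hlt)
  · exact Or.inr ⟨e, hcomp _ _ _ hle⟩

theorem stmt_18_general {I : Type*} (PP QQ : PartialOrder I)
    (hframe : ∀ L : LinearOrder I, (∀ x y : I, PP.le x y → L.le x y) →
      ∀ x y : I, QQ.le x y → L.le x y)
    {X : I → Type*}
    (Pc Qc : ∀ i, PartialOrder (X i))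
    (hcomp : ∀ i, ∀ L : LinearOrder (X i),
      (∀ x y : X i, (Pc i).le x y → L.le x y) →
      ∀ x y : X i, (Qc i).le x y → L.le x y)
    (L : LinearOrder (Σ i, X i))
    (hL : ∀ x y : Σ i, X i, assembledLe PP Pc x y → L.le x y) :
    ∀ x y : Σ i, X i, assembledLe QQ Qc x y → L.le x y :=
  fun x y hxy => hL x y <| assembledLe_mono
    (fun _ _ => PartialOrder.le_of_forall_linearOrder_extends PP QQ hframe)
    (fun i _ _ => PartialOrder.le_of_forall_linearOrder_extends (Pc i) (Qc i) (hcomp i)) hxy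

/-- poset assembly preserves linear-extension containment. -/
theorem stmt_18 {I : Type*} [Fintype I] (PP QQ : PartialOrder I)
    (hframe : ∀ L : LinearOrder I, (∀ x y : I, PP.le x y → L.le x y) →
      ∀ x y : I, QQ.le x y → L.le x y)
    {X : I → Type*} [∀ i, Fintype (X i)]
    (Pc Qc : ∀ i, PartialOrder (X i))
    (hcomp : ∀ i, ∀ L : LinearOrder (X i),
      (∀ x y : X i, (Pc i).le x y → L.le x y) →
      ∀ x y : X i, (Qc i).le x y → L.le x y)
    (L : LinearOrder (Σ i, X i))
    (hL : ∀ x y : Σ i, X i, assembledLe PP Pc x y → L.le x y) :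
    ∀ x y : Σ i, X i, assembledLe QQ Qc x y → L.le x y :=
  stmt_18_general PP QQ hframe Pc Qc hcomp L hL
end
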